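/- Let F be a finite field whose multiplicative group Fˣ is generated by an element t. Let W = (Fˣ × Fˣ) ⋊ C₂ act on V = F × F, where ((u₁,u₂),1) acts by (v₁,v₂) ↦ (u₁v₁, u₂v₂) and ((u₁,u₂),σ) acts by (v₁,v₂) ↦ (u₁v₂, u₂v₁), σ being the nontrivial element of C₂. Let H be a subgroup of W containing the elements ((t,1),σ) and ((t²,1),1), and let p be a prime. Assume that either H is a proper subgroup of W and |F| = 2p^s + 1 for some odd prime p and positive integer s, or p = 2 and |F| = 2^s + 1 for some positive integer s. Then the commutator subgroup of H is a p-group, and for every nonzero v ∈ V the stabilizer of v in H is a p-group. -/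

import Mathlib

open SemidirectProduct

def homC2 {H : Type*} [Group H] (τ : H) (hτ : τ * τ = 1) : Multiplicative (ZMod 2) →* H where
  toFun s := if s.toAdd = 0 then 1 else τ
  map_one' := by simp
  map_mul' x y := by
    have h2 : ∀ z : ZMod 2, z = 0 ∨ z = 1 := by decide
    have h11 : (1 : ZMod 2) + 1 = 0 := by decide
    rcases h2 x.toAdd with hx | hx <;> rcases h2 y.toAdd with hy | hy <;>
      simp [toAdd_mul, hx, hy, h11, hτ]

def swapAut (A : Type*) [Group A] : MulAut (A × A) := (MulEquiv.prodComm : A × A ≃* A × A)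

theorem swapAut_sq (A : Type*) [Group A] : swapAut A * swapAut A = 1 := by
  ext p <;> simp [swapAut, MulAut.mul_apply]

def swapAction (A : Type*) [Group A] : Multiplicative (ZMod 2) →* MulAut (A × A) :=
  homC2 (swapAut A) (swapAut_sq A)

abbrev WreathC2 (A : Type*) [Group A] := (A × A) ⋊[swapAction A] Multiplicative (ZMod 2)

/-- The permutation of `F × F` swapping the coordinates. -/
def swapPerm (F : Type*) : Equiv.Perm (F × F) := Equiv.prodComm F F

theorem swapPerm_sq (F : Type*) : swapPerm F * swapPerm F = 1 := Equiv.ext fun _ => rfl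

/-- The componentwise multiplication action of `Fˣ × Fˣ` on `F × F`, as permutations. -/
def basePerm (F : Type*) [Field F] : (Fˣ × Fˣ) →* Equiv.Perm (F × F) where
  toFun u := Equiv.prodCongr (MulAction.toPerm u.1) (MulAction.toPerm u.2)
  map_one' := by ext v <;> simp
  map_mul' u w := by ext v <;> simp [mul_smul]

/-- The action of the wreath product `Fˣ ≀ C₂` on `F × F`: first permute coordinates
according to the `C₂`-component, then multiply coordinatewise by the units. -/
def wreathActHom (F : Type*) [Field F] : WreathC2 Fˣ →* Equiv.Perm (F × F) :=
  SemidirectProduct.lift (basePerm F) (homC2 (swapPerm F) (swapPerm_sq F)) (by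
    intro s
    by_cases hs : s = 1 <;>
      · ext u v <;>
        simp [swapAction, homC2, swapAut, swapPerm, basePerm, hs, MulAut.conj_apply,
          Units.smul_def, Equiv.Perm.inv_def, Equiv.Perm.mul_apply])


open SemidirectProduct Multiplicative
open scoped commutatorElement

abbrev sg : Multiplicative (ZMod 2) := Multiplicative.ofAdd 1

section helpers
variable {F : Type*} [Field F]

lemma act_one (u : Fˣ × Fˣ) : swapAction Fˣ 1 u = u := rfl

lemma act_sg (u : Fˣ × Fˣ) : swapAction Fˣ sg u = (u.2, u.1) := rfl

lemma sg_mul_sg : sg * sg = 1 := by decide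

lemma sg_inv : sg⁻¹ = sg := by decide

/-- the embedding `x ↦ ((x, x⁻¹), 1)` -/
def phi (F : Type*) [Field F] : Fˣ →* WreathC2 Fˣ :=
  (inl : (Fˣ × Fˣ) →* WreathC2 Fˣ).comp ((MonoidHom.id Fˣ).prod invMonoidHom)

lemma phi_apply (x : Fˣ) : phi F x = inl (x, x⁻¹) := rfl

lemma comm_one_one (u v : Fˣ × Fˣ) : ⁅(⟨u, 1⟩ : WreathC2 Fˣ), ⟨v, 1⟩⁆ = phi F 1 := by
  refine SemidirectProduct.ext ?_ ?_ <;>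
    simp [commutatorElement_def, mul_left, mul_right, inv_left, inv_right, act_one, phi_apply,
      Prod.ext_iff, mul_comm, mul_left_comm, mul_assoc]

lemma comm_one_sg (u v : Fˣ × Fˣ) :
    ⁅(⟨u, 1⟩ : WreathC2 Fˣ), ⟨v, sg⟩⁆ = phi F (u.1 * u.2⁻¹) := by
  refine SemidirectProduct.ext ?_ ?_ <;>
    simp [commutatorElement_def, mul_left, mul_right, inv_left, inv_right, act_one, act_sg, sg_inv,
      sg_mul_sg, phi_apply, Prod.ext_iff, mul_comm, mul_left_comm, mul_assoc]

end helpers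

section helpers2
variable {F : Type*} [Field F]

lemma comm_sg_one (u v : Fˣ × Fˣ) :
    ⁅(⟨u, sg⟩ : WreathC2 Fˣ), ⟨v, 1⟩⁆ = phi F (v.2 * v.1⁻¹) := by
  refine SemidirectProduct.ext ?_ ?_ <;>
    simp [commutatorElement_def, mul_left, mul_right, inv_left, inv_right, act_one, act_sg, sg_inv,
      sg_mul_sg, phi_apply, Prod.ext_iff, mul_comm, mul_left_comm, mul_assoc]
  all_goals try refine ⟨?_, ?_⟩
  all_goals (apply Units.ext; push_cast; field_simp; try ring)

lemma comm_sg_sg (u v : Fˣ × Fˣ) :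
    ⁅(⟨u, sg⟩ : WreathC2 Fˣ), ⟨v, sg⟩⁆ = phi F (u.1 * u.2⁻¹ * (v.2 * v.1⁻¹)) := by
  refine SemidirectProduct.ext ?_ ?_ <;>
    simp [commutatorElement_def, mul_left, mul_right, inv_left, inv_right, act_one, act_sg, sg_inv,
      sg_mul_sg, phi_apply, Prod.ext_iff, mul_comm, mul_left_comm, mul_assoc]
  all_goals try refine ⟨?_, ?_⟩
  all_goals (apply Units.ext; push_cast; field_simp; try ring)

lemma ratio_pow {G : Type*} [CommGroup G] (a b : G) (M : ℕ) (hb : b ^ (2 * M) = 1) :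
    (a * b⁻¹) ^ M = (a * b) ^ M := by
  have h2 : b ^ M * b ^ M = 1 := by rw [← pow_add, ← two_mul]; exact hb
  rw [mul_pow, mul_pow, inv_pow, inv_eq_of_mul_eq_one_right h2]

lemma mem_pow_one {G : Type*} [Group G] {S : Subgroup G} (g : ↥S) (e : ℕ)
    (h : (g : G) ^ e = 1) : g ^ e = 1 := by
  ext; push_cast; exact h

end helpers2

section chi
variable {F : Type*} [Field F]

/-- The character `((u₁,u₂),σ^ε) ↦ (u₁u₂)^M · c^ε`. -/
def chiHom (F : Type*) [Field F] (M : ℕ) (c : Fˣ) (hc2 : c * c = 1) : WreathC2 Fˣ →* Fˣ where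
  toFun w := (w.left.1 * w.left.2) ^ M * (if w.right = 1 then 1 else c)
  map_one' := by simp
  map_mul' g h := by
    have h2 : ∀ z : Multiplicative (ZMod 2), z = 1 ∨ z = sg := by decide
    have hcx : ∀ x : Fˣ, c * (c * x) = x := fun x => by rw [← mul_assoc, hc2, one_mul]
    rcases h2 g.right with hg | hg <;> rcases h2 h.right with hh | hh <;>
      simp [mul_left, mul_right, hg, hh, act_one, act_sg, sg_mul_sg, hc2, hcx, mul_pow,
        mul_comm, mul_left_comm, mul_assoc]

lemma chiHom_apply (M : ℕ) (c : Fˣ) (hc2 : c * c = 1) (w : WreathC2 Fˣ) :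
    chiHom F M c hc2 w = (w.left.1 * w.left.2) ^ M * (if w.right = 1 then 1 else c) := rfl

end chi

section act
variable {F : Type*} [Field F]

lemma wreathAct_one (u : Fˣ × Fˣ) (x : F × F) :
    wreathActHom F ⟨u, 1⟩ x = (u.1 * x.1, u.2 * x.2) := by
  simp [wreathActHom, SemidirectProduct.lift, basePerm, homC2, swapPerm,
    Equiv.Perm.mul_apply, Units.smul_def, Prod.map, MulAction.toPerm]

lemma wreathAct_sg (u : Fˣ × Fˣ) (x : F × F) :
    wreathActHom F ⟨u, sg⟩ x = (u.1 * x.2, u.2 * x.1) := by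
  simp [wreathActHom, SemidirectProduct.lift, basePerm, homC2, swapPerm, sg,
    Equiv.Perm.mul_apply, Units.smul_def, Prod.map, MulAction.toPerm]

end act

theorem key (F : Type*) [Field F] (H : Subgroup (WreathC2 Fˣ)) (p M K : ℕ) (c : Fˣ)
    (hM : M = p ^ K)
    (F1 : ∀ x : Fˣ, x ^ (2 * M) = 1)
    (F2 : ∀ g ∈ H, (g.left.1 * g.left.2) ^ M = if g.right = 1 then 1 else c)
    (hc2 : c * c = 1)
    (F4 : c = 1 → 2 ∣ M) :
    IsPGroup p ↥(commutator ↥H) ∧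
      ∀ v : F × F, v ≠ 0 →
        IsPGroup p
          ↥(H ⊓ (MulAction.stabilizer (Equiv.Perm (F × F)) v).comap (wreathActHom F)) := by
  have h2 : ∀ z : Multiplicative (ZMod 2), z = 1 ∨ z = sg := by decide
  set P : Subgroup (WreathC2 Fˣ) :=
    Subgroup.map (phi F) (powMonoidHom M : Fˣ →* Fˣ).ker with hP
  have hcomm : ⁅H, H⁆ ≤ P := by
    rw [Subgroup.commutator_le]
    intro g hg h hh
    obtain ⟨u, s⟩ := g
    obtain ⟨v, r⟩ := h
    have Fg := F2 _ hg
    have Fh := F2 _ hh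
    rcases h2 s with rfl | rfl <;> rcases h2 r with rfl | rfl
    · exact ⟨1, by simp [MonoidHom.mem_ker], (comm_one_one u v).symm⟩
    · refine ⟨u.1 * u.2⁻¹, ?_, (comm_one_sg u v).symm⟩
      have : (u.1 * u.2⁻¹) ^ M = 1 := by
        rw [ratio_pow _ _ _ (F1 u.2)]; simpa using Fg
      simpa [MonoidHom.mem_ker] using this
    · refine ⟨v.2 * v.1⁻¹, ?_, (comm_sg_one u v).symm⟩
      have : (v.2 * v.1⁻¹) ^ M = 1 := by
        rw [ratio_pow _ _ _ (F1 v.1), mul_comm v.2 v.1]; simpa using Fh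
      simpa [MonoidHom.mem_ker] using this
    · refine ⟨u.1 * u.2⁻¹ * (v.2 * v.1⁻¹), ?_, (comm_sg_sg u v).symm⟩
      have e1 : (u.1 * u.2⁻¹) ^ M = c := by
        rw [ratio_pow _ _ _ (F1 u.2)]; simpa using Fg
      have e2 : (v.2 * v.1⁻¹) ^ M = c := by
        rw [ratio_pow _ _ _ (F1 v.1), mul_comm v.2 v.1]; simpa using Fh
      have : (u.1 * u.2⁻¹ * (v.2 * v.1⁻¹)) ^ M = 1 := by rw [mul_pow, e1, e2, hc2]
      simpa [MonoidHom.mem_ker] using this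
  have hPpow : ∀ w ∈ P, w ^ M = 1 := by
    rintro w ⟨x, hx, rfl⟩
    have hx' : x ^ M = 1 := by simpa [MonoidHom.mem_ker] using hx
    rw [← map_pow, hx', map_one]
  constructor
  · intro g
    refine ⟨K, ?_⟩
    rw [← hM]
    have hmem : ((g : ↥H) : WreathC2 Fˣ) ∈ ⁅H, H⁆ := by
      have h0 : ((g : ↥H) : WreathC2 Fˣ) ∈ Subgroup.map H.subtype (commutator ↥H) :=
        ⟨(g : ↥H), g.2, rfl⟩
      have heq : Subgroup.map H.subtype (commutator ↥H) = ⁅H, H⁆ := by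
        rw [commutator_def, Subgroup.map_commutator, ← MonoidHom.range_eq_map,
          Subgroup.range_subtype]
      exact heq ▸ h0
    exact mem_pow_one g M (mem_pow_one (g : ↥H) M (hPpow _ (hcomm hmem)))
  · intro v hv g
    refine ⟨K + 1, ?_⟩
    have hgH : (g : WreathC2 Fˣ) ∈ H := g.2.1
    have hgS : wreathActHom F (g : WreathC2 Fˣ) v = v := by
      have h0 := (Subgroup.mem_inf.mp g.2).2
      rw [Subgroup.mem_comap, MulAction.mem_stabilizer_iff, Equiv.Perm.smul_def] at h0
      exact h0
    suffices hWp : ((g : WreathC2 Fˣ)) ^ (p ^ (K + 1)) = 1 by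
      exact mem_pow_one g _ hWp
    have hpM : p ^ (K + 1) = M * p := by rw [pow_succ, hM]
    obtain ⟨u, s, hgw⟩ : ∃ (u : Fˣ × Fˣ) (s : Multiplicative (ZMod 2)),
        (g : WreathC2 Fˣ) = ⟨u, s⟩ := ⟨(g : WreathC2 Fˣ).left, (g : WreathC2 Fˣ).right, rfl⟩
    rw [hgw] at hgH hgS ⊢
    have Fg := F2 _ hgH
    rcases h2 s with rfl | rfl
    · -- diagonal element
      rw [wreathAct_one] at hgS
      have e1 : (u.1 : F) * v.1 = v.1 := congrArg Prod.fst hgS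
      have e2 : (u.2 : F) * v.2 = v.2 := congrArg Prod.snd hgS
      have Fg' : (u.1 * u.2) ^ M = (if (1 : Multiplicative (ZMod 2)) = 1 then (1:Fˣ) else c) := Fg
      rw [if_pos rfl] at Fg'
      have hinl : (⟨u, (1 : Multiplicative (ZMod 2))⟩ : WreathC2 Fˣ) = inl u := rfl
      have hpow : ∀ (hu : u ^ M = 1), (⟨u, (1 : Multiplicative (ZMod 2))⟩ : WreathC2 Fˣ) ^ (M * p) = 1 := by
        intro hu
        rw [hinl, pow_mul, ← map_pow, hu, map_one, one_pow]
      rw [hpM]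
      rcases eq_or_ne v.1 0 with hv1 | hv1
      · -- v = (0, v2), v2 ≠ 0, so u.2 = 1 and u.1 ^ M = 1
        have hv2 : v.2 ≠ 0 := by
          intro h0
          exact hv (Prod.ext_iff.mpr ⟨by simpa using hv1, by simpa using h0⟩)
        have hu2 : u.2 = 1 := Units.ext (by
          push_cast
          exact mul_right_cancel₀ hv2 (e2.trans (one_mul v.2).symm))
        rw [hu2, mul_one] at Fg'
        exact hpow (Prod.ext_iff.mpr ⟨by simpa using Fg', by simp [hu2]⟩)
      · -- v.1 ≠ 0, so u.1 = 1
        have hu1 : u.1 = 1 := Units.ext (by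
          push_cast
          exact mul_right_cancel₀ hv1 (e1.trans (one_mul v.1).symm))
        rw [hu1, one_mul] at Fg'
        exact hpow (Prod.ext_iff.mpr ⟨by simp [hu1], by simpa using Fg'⟩)
    · -- swapping element
      rw [wreathAct_sg] at hgS
      have e1 : (u.1 : F) * v.2 = v.1 := congrArg Prod.fst hgS
      have e2 : (u.2 : F) * v.1 = v.2 := congrArg Prod.snd hgS
      have hsg1 : sg ≠ (1 : Multiplicative (ZMod 2)) := by decide
      have Fg' : (u.1 * u.2) ^ M = (if sg = (1 : Multiplicative (ZMod 2)) then (1:Fˣ) else c) := Fg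
      rw [if_neg hsg1] at Fg'
      have hv1 : v.1 ≠ 0 := by
        intro h0
        have h02 : v.2 = 0 := by rw [← e2, h0, mul_zero]
        exact hv (Prod.ext_iff.mpr ⟨by simpa using h0, by simpa using h02⟩)
      have hu12 : u.1 * u.2 = 1 := Units.ext (by
        push_cast
        have hch : (u.1 : F) * (u.2 : F) * v.1 = v.1 := by
          rw [mul_assoc, e2, e1]
        exact mul_right_cancel₀ hv1 (hch.trans (one_mul v.1).symm))
      have hc1 : c = 1 := by rw [← Fg', hu12, one_pow]
      obtain ⟨d, hd⟩ := F4 hc1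
      have hsq : (⟨u, sg⟩ : WreathC2 Fˣ) * ⟨u, sg⟩ = 1 := by
        refine SemidirectProduct.ext ?_ ?_
        · show u * swapAction Fˣ sg u = 1
          rw [act_sg]
          refine Prod.ext_iff.mpr ⟨?_, ?_⟩
          · simpa using hu12
          · simpa [mul_comm] using hu12
        · show sg * sg = 1
          exact sg_mul_sg
      have hsq2 : (⟨u, sg⟩ : WreathC2 Fˣ) ^ 2 = 1 := by rw [pow_two, hsq]
      have : M * p = 2 * (d * p) := by rw [hd]; ring
      rw [hpM, this, pow_mul, hsq2, one_pow]

/-- Let `F` be a finite field with `Fˣ = ⟨t⟩`, and `H ≤ W = Fˣ ≀ C₂` (acting on `F × F`)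
a subgroup containing `((t,1),σ)` and `((t²,1),1)`.  Suppose either `H` is proper in `W`
and `|F| = 2 p ^ s + 1` for an odd prime `p` and some `s ≥ 1`, or `p = 2` and
`|F| = 2 ^ s + 1` for some `s ≥ 1`.  Then the commutator subgroup of `H` and the
stabilizer in `H` of every nonzero vector of `F × F` are `p`-groups. -/
theorem wreath_commutator_and_stabilizers_pGroups (F : Type*) [Field F] [Fintype F]
    (t : Fˣ) (hgen : ∀ u : Fˣ, u ∈ Subgroup.zpowers t)
    (H : Subgroup (WreathC2 Fˣ))
    (h1 : (⟨(t, 1), Multiplicative.ofAdd 1⟩ : WreathC2 Fˣ) ∈ H)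
    (h2 : (⟨(t ^ 2, 1), 1⟩ : WreathC2 Fˣ) ∈ H)
    (p : ℕ) (hp : p.Prime)
    (hcase : (H ≠ ⊤ ∧ Odd p ∧ ∃ s : ℕ, 0 < s ∧ Fintype.card F = 2 * p ^ s + 1) ∨
      (p = 2 ∧ ∃ s : ℕ, 0 < s ∧ Fintype.card F = 2 ^ s + 1)) :
    IsPGroup p ↥(commutator ↥H) ∧
      ∀ v : F × F, v ≠ 0 →
        IsPGroup p
          ↥(H ⊓ (MulAction.stabilizer (Equiv.Perm (F × F)) v).comap (wreathActHom F)) := by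
  letI := Classical.decEq F
  have hcardU : Fintype.card Fˣ = Fintype.card F - 1 := Fintype.card_units (α := F)
  have ho : orderOf t = Fintype.card Fˣ := by
    rw [orderOf_eq_card_of_forall_mem_zpowers hgen, Nat.card_eq_fintype_card]
  have hC2 : ∀ z : Multiplicative (ZMod 2), z = 1 ∨ z = sg := by decide
  have hsg1 : sg ≠ (1 : Multiplicative (ZMod 2)) := by decide
  have hb2 : (⟨(t ^ 2, 1), 1⟩ : WreathC2 Fˣ) = inl ((t ^ 2, (1:Fˣ)) : Fˣ × Fˣ) := rfl
  rcases hcase with ⟨hHtop, hpodd, s, hs, hFcard⟩ | ⟨hp2, s, hs, hFcard⟩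
  · -- odd case
    have hM0 : 0 < p ^ s := pow_pos hp.pos s
    have hn : Fintype.card Fˣ = 2 * p ^ s := by rw [hcardU, hFcard]; exact Nat.add_sub_cancel _ _
    have F1 : ∀ x : Fˣ, x ^ (2 * p ^ s) = 1 := fun x => by rw [← hn]; exact pow_card_eq_one
    have htM2 : (t ^ p ^ s : Fˣ) * t ^ p ^ s = 1 := by rw [← pow_add, ← two_mul]; exact F1 t
    have htM1 : (t ^ p ^ s : Fˣ) ≠ 1 := by
      intro h0
      have hdvd := orderOf_dvd_of_pow_eq_one h0
      rw [ho, hn] at hdvd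
      have := Nat.le_of_dvd hM0 hdvd
      omega
    have htneg : (t ^ p ^ s : Fˣ) = -1 := by
      apply Units.ext
      have hval : ((t ^ p ^ s : Fˣ) : F) * ((t ^ p ^ s : Fˣ) : F) = 1 := by
        rw [← Units.val_mul, htM2, Units.val_one]
      rcases mul_self_eq_one_iff.mp hval with h | h
      · exact absurd (Units.val_eq_one.mp h) htM1
      · rw [h, Units.val_neg, Units.val_one]
    have hneg1 : (-1 : Fˣ) ≠ 1 := htneg ▸ htM1
    have hc2 : (-1 : Fˣ) * -1 = 1 := by simp
    set χ := chiHom F (p ^ s) (-1) hc2 with hχ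
    have hsq : ∀ w, χ w * χ w = 1 := by
      intro w
      rw [hχ, chiHom_apply, mul_mul_mul_comm]
      have hA : ((w.left.1 * w.left.2) ^ p ^ s) * ((w.left.1 * w.left.2) ^ p ^ s) = 1 := by
        rw [← pow_add, ← two_mul]; exact F1 _
      rw [hA, one_mul]
      by_cases h : w.right = 1 <;> simp [h, hc2]
    -- generation of the even part
    have haa : (⟨(t, 1), Multiplicative.ofAdd 1⟩ : WreathC2 Fˣ) *
        ⟨(t, 1), Multiplicative.ofAdd 1⟩ = inl ((t, t) : Fˣ × Fˣ) := by
      refine SemidirectProduct.ext ?_ ?_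
      · show ((t, 1) : Fˣ × Fˣ) * swapAction Fˣ sg (t, 1) = ((t, t) : Fˣ × Fˣ)
        rw [act_sg]
        exact Prod.ext_iff.mpr ⟨mul_one t, one_mul t⟩
      · exact sg_mul_sg
    have htt : (inl ((t, t) : Fˣ × Fˣ) : WreathC2 Fˣ) ∈ H := by
      rw [← haa]; exact mul_mem h1 h1
    have htsq : (inl ((t ^ 2, (1:Fˣ)) : Fˣ × Fˣ) : WreathC2 Fˣ) ∈ H := by rw [← hb2]; exact h2
    have hbase : ∀ i j : ℤ, 2 ∣ i - j →
        (inl ((t ^ i, t ^ j) : Fˣ × Fˣ) : WreathC2 Fˣ) ∈ H := by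
      rintro i j ⟨k, hk⟩
      have hmemH : (inl ((t, t) : Fˣ × Fˣ) : WreathC2 Fˣ) ^ j *
          (inl ((t ^ 2, (1:Fˣ)) : Fˣ × Fˣ) : WreathC2 Fˣ) ^ k ∈ H :=
        mul_mem (zpow_mem htt j) (zpow_mem htsq k)
      have heq : (inl ((t, t) : Fˣ × Fˣ) : WreathC2 Fˣ) ^ j *
          (inl ((t ^ 2, (1:Fˣ)) : Fˣ × Fˣ) : WreathC2 Fˣ) ^ k
          = inl ((t ^ i, t ^ j) : Fˣ × Fˣ) := by
        rw [← map_zpow, ← map_zpow, ← map_mul]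
        congr 1
        have e1 : ((t, t) : Fˣ × Fˣ) ^ j = ((t ^ j : Fˣ), (t ^ j : Fˣ)) :=
          (map_zpow ((MonoidHom.id Fˣ).prod (MonoidHom.id Fˣ)) t j).symm
        have e2 : ((t ^ 2, (1:Fˣ)) : Fˣ × Fˣ) ^ k = (((t ^ 2 : Fˣ) ^ k : Fˣ), (1 : Fˣ)) :=
          (map_zpow (MonoidHom.inl Fˣ Fˣ) (t ^ 2) k).symm
        rw [e1, e2, Prod.mk_mul_mk, mul_one]
        refine Prod.ext_iff.mpr ⟨?_, rfl⟩
        show t ^ j * (t ^ (2:ℕ)) ^ k = t ^ i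
        rw [← zpow_natCast t 2, ← zpow_mul, ← zpow_add]
        congr 1
        omega
      rwa [heq] at hmemH
    -- the kernel of χ is contained in H
    have hker : ∀ w : WreathC2 Fˣ, χ w = 1 → w ∈ H := by
      intro w hw
      obtain ⟨i, hi⟩ := Subgroup.mem_zpowers_iff.mp (hgen w.left.1)
      obtain ⟨j, hj⟩ := Subgroup.mem_zpowers_iff.mp (hgen w.left.2)
      rw [hχ, chiHom_apply] at hw
      rcases hC2 w.right with hr | hr
      · rw [hr, if_pos rfl, mul_one, ← hi, ← hj] at hw
        have hz : (t : Fˣ) ^ ((i + j) * ((p ^ s : ℕ) : ℤ)) = 1 := by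
          rw [zpow_mul, zpow_natCast, zpow_add]; exact hw
        have hdvd := orderOf_dvd_iff_zpow_eq_one.mpr hz
        rw [ho, hn] at hdvd
        push_cast at hdvd
        obtain ⟨e, he⟩ := hdvd
        have hps : ((p : ℤ)) ^ s ≠ 0 := pow_ne_zero s (by exact_mod_cast hp.pos.ne')
        have hij : i + j = 2 * e := by
          apply mul_right_cancel₀ hps
          linear_combination he
        have hmem := hbase i j (by omega)
        have hform : w = inl ((t ^ i, t ^ j) : Fˣ × Fˣ) := by
          refine SemidirectProduct.ext ?_ ?_
          · exact Prod.ext_iff.mpr ⟨hi.symm, hj.symm⟩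
          · exact hr
        rwa [hform]
      · rw [hr, if_neg hsg1, ← hi, ← hj] at hw
        have hx : (t ^ i * t ^ j : Fˣ) ^ p ^ s = -1 := by
          have h' := congrArg (· * (-1 : Fˣ)) hw
          simpa [mul_assoc, hc2] using h'
        have hxx : ((t ^ (i + j) : Fˣ)) ^ p ^ s = -1 := by rw [zpow_add]; exact hx
        have hz0 : ((t ^ (i + j - 1) : Fˣ)) ^ p ^ s = 1 := by
          rw [sub_eq_add_neg, zpow_add, mul_pow, hxx, zpow_neg, zpow_one, inv_pow, htneg]
          simp
        have hz : (t : Fˣ) ^ ((i + j - 1) * ((p ^ s : ℕ) : ℤ)) = 1 := by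
          rw [zpow_mul, zpow_natCast]; exact hz0
        have hdvd := orderOf_dvd_iff_zpow_eq_one.mpr hz
        rw [ho, hn] at hdvd
        push_cast at hdvd
        obtain ⟨e, he⟩ := hdvd
        have hps : ((p : ℤ)) ^ s ≠ 0 := pow_ne_zero s (by exact_mod_cast hp.pos.ne')
        have hij : i + j - 1 = 2 * e := by
          apply mul_right_cancel₀ hps
          linear_combination he
        have hmem := hbase j (i - 1) (by omega)
        have hform : w = (⟨(t, 1), Multiplicative.ofAdd 1⟩ : WreathC2 Fˣ) *
            inl ((t ^ j, t ^ (i - 1)) : Fˣ × Fˣ) := by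
          refine SemidirectProduct.ext ?_ ?_
          · show w.left = ((t, 1) : Fˣ × Fˣ) * swapAction Fˣ sg (t ^ j, t ^ (i - 1))
            rw [act_sg]
            refine Prod.ext_iff.mpr ⟨?_, ?_⟩
            · show w.left.1 = t * t ^ (i - 1)
              calc w.left.1 = t ^ i := hi.symm
                _ = t ^ (i - 1 + 1) := by congr 1; omega
                _ = t ^ (i - 1) * t := zpow_add_one t (i - 1)
                _ = t * t ^ (i - 1) := mul_comm _ _
            · show w.left.2 = 1 * t ^ j
              rw [one_mul]
              exact hj.symm
          · show w.right = sg * 1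
            rw [mul_one, hr]
        rw [hform]
        exact mul_mem h1 hmem
    -- maximality: H proper forces H ≤ ker χ
    have hHker : ∀ g ∈ H, χ g = 1 := by
      by_contra hcon
      push_neg at hcon
      obtain ⟨h0, hh0, hne⟩ := hcon
      apply hHtop
      rw [Subgroup.eq_top_iff']
      intro w
      by_cases hw : χ w = 1
      · exact hker w hw
      · have hval : ∀ x : WreathC2 Fˣ, χ x ≠ 1 → χ x = -1 := by
          intro x hx
          apply Units.ext
          have hvv : ((χ x : Fˣ) : F) * ((χ x : Fˣ) : F) = 1 := by
            rw [← Units.val_mul, hsq x, Units.val_one]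
          rcases mul_self_eq_one_iff.mp hvv with h | h
          · exact absurd (Units.val_eq_one.mp h) hx
          · rw [h, Units.val_neg, Units.val_one]
        have hone : χ (w * h0⁻¹) = 1 := by
          rw [map_mul, map_inv, hval w hw, hval h0 hne]
          simp
        have hmm := mul_mem (hker _ hone) hh0
        rwa [inv_mul_cancel_right] at hmm
    have F2 : ∀ g ∈ H, (g.left.1 * g.left.2) ^ p ^ s = if g.right = 1 then 1 else (-1 : Fˣ) := by
      intro g hg
      have hg1 := hHker g hg
      rw [hχ, chiHom_apply] at hg1
      rcases hC2 g.right with hr | hr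
      · rw [hr, if_pos rfl, mul_one] at hg1
        rw [hr, if_pos rfl]
        exact hg1
      · rw [hr, if_neg hsg1] at hg1
        rw [hr, if_neg hsg1]
        have h' := congrArg (· * (-1 : Fˣ)) hg1
        simpa [mul_assoc, hc2] using h'
    exact key F H p (p ^ s) s (-1) rfl F1 F2 hc2 (fun h => absurd h hneg1)
  · -- p = 2 case
    subst hp2
    have hn : Fintype.card Fˣ = 2 ^ s := by rw [hcardU, hFcard]; exact Nat.add_sub_cancel _ _
    have hxM : ∀ x : Fˣ, x ^ 2 ^ s = 1 := fun x => by rw [← hn]; exact pow_card_eq_one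
    refine key F H 2 (2 ^ s) s 1 rfl ?_ ?_ (one_mul 1) (fun _ => dvd_pow_self 2 hs.ne') 
    · intro x
      rw [mul_comm, pow_mul, hxM, one_pow]
    · intro g hg
      rw [hxM]
      simp
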